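/- arXiv:0712.3461 — 9 statements merged into one kernel-verified Lean document; each statement's English description precedes it below -/
import Mathlib

section
/- Every linear category (category internal to Vect) is a groupoid: every morphism is invertible. -/
/-- A linear category (2-vector space): a category internal to the category of
vector spaces over `k`.  `V₀` is the vector space of objects, `V₁` the vector
space of arrows, with linear source `s`, target `t`, identity `e`, and a
composition defined on composable pairs, which is linear (as a map on the
pullback of composable pairs) and satisfies the category axioms. -/
structure LinCat (k : Type*) [Field k] (V₀ V₁ : Type*)
    [AddCommGroup V₀] [Module k V₀] [AddCommGroup V₁] [Module k V₁] where
  s : V₁ →ₗ[k] V₀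
  t : V₁ →ₗ[k] V₀
  e : V₀ →ₗ[k] V₁
  comp : ∀ a b : V₁, s b = t a → V₁
  s_e : ∀ x, s (e x) = x
  t_e : ∀ x, t (e x) = x
  s_comp : ∀ a b h, s (comp a b h) = s a
  t_comp : ∀ a b h, t (comp a b h) = t b
  comp_add : ∀ a b a' b' (h : s b = t a) (h' : s b' = t a')
      (h'' : s (b + b') = t (a + a')),
      comp (a + a') (b + b') h'' = comp a b h + comp a' b' h'
  comp_smul : ∀ (c : k) a b (h : s b = t a) (h' : s (c • b) = t (c • a)),
      comp (c • a) (c • b) h' = c • comp a b h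
  id_comp : ∀ (a : V₁) (h : s a = t (e (s a))), comp (e (s a)) a h = a
  comp_id : ∀ (a : V₁) (h : s (e (t a)) = t a), comp a (e (t a)) h = a
  assoc : ∀ (a b c : V₁) (h₁ : s b = t a) (h₂ : s c = t b)
      (h₃ : s c = t (comp a b h₁)) (h₄ : s (comp b c h₂) = t a),
      comp (comp a b h₁) c h₃ = comp a (comp b c h₂) h₄

/-- Every linear category is a groupoid: every arrow `a` has a
(two-sided) inverse arrow `b`. -/
theorem linCat_isGroupoid (k : Type*) [Field k] (V₀ V₁ : Type*)
    [AddCommGroup V₀] [Module k V₀] [AddCommGroup V₁] [Module k V₁]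
    (L : LinCat k V₀ V₁) (a : V₁) :
    ∃ (b : V₁) (h₁ : L.s b = L.t a) (h₂ : L.s a = L.t b),
      L.comp a b h₁ = L.e (L.s a) ∧ L.comp b a h₂ = L.e (L.t a) := by
  have ccong : ∀ (a a' b b' : V₁) (_ : a = a') (_ : b = b') (h : L.s b = L.t a)
      (h' : L.s b' = L.t a'), L.comp a b h = L.comp a' b' h' := by
    rintro a a' b b' rfl rfl h h'; rfl
  have key : ∀ (a b : V₁) (h : L.s b = L.t a), L.comp a b h = a + b - L.e (L.t a) := by
    intro a b h
    have hs0 : L.s (b - L.e (L.t a)) = L.t 0 := by simp [h, L.s_e]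
    have hid : L.s (L.e (L.t a)) = L.t a := L.s_e _
    have h' : L.s (L.e (L.t a) + (b - L.e (L.t a))) = L.t (a + 0) := by
      simp [L.s_e, h]
    have hsplit := L.comp_add a (L.e (L.t a)) 0 (b - L.e (L.t a)) hid hs0 h'
    have h1 : L.comp a (L.e (L.t a)) hid = a := L.comp_id a hid
    have h2 : L.comp 0 (b - L.e (L.t a)) hs0 = b - L.e (L.t a) := by
      have hse : L.s (b - L.e (L.t a)) = 0 := by simp [h, L.s_e]
      have he0 : L.e (L.s (b - L.e (L.t a))) = (0 : V₁) := by simp [hse]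
      have hh : L.s (b - L.e (L.t a)) = L.t (L.e (L.s (b - L.e (L.t a)))) := by
        rw [L.t_e, hse]
      calc L.comp 0 (b - L.e (L.t a)) hs0
          = L.comp (L.e (L.s (b - L.e (L.t a)))) (b - L.e (L.t a)) hh :=
            ccong _ _ _ _ he0.symm rfl _ _
        _ = b - L.e (L.t a) := L.id_comp _ hh
    have heq : L.comp a b h = L.comp (a + 0) (L.e (L.t a) + (b - L.e (L.t a))) h' :=
      ccong _ _ _ _ (by abel) (by abel) _ _
    rw [heq, hsplit, h1, h2]
    abel
  refine ⟨L.e (L.s a) + L.e (L.t a) - a, ?_, ?_, ?_, ?_⟩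
  · simp [L.s_e]
  · simp [L.t_e]
  · rw [key]; abel
  · rw [key]
    have : L.t (L.e (L.s a) + L.e (L.t a) - a) = L.s a := by simp [L.t_e]
    rw [this]; abel
end

section
/- In a linear category, composition of arrows is determined by addition of arrow parts: if a : x → y and b : y → z are arrows with arrow parts a' = a − 1_x and b' = b − 1_y (both in ker(s)), then the composite b∘a has arrow part a' + b', i.e. b∘a = 1_x + a' + b'. -/
/-- In a linear category, composition is addition of arrow
parts: for composable arrows `a : x → y` and `b : y → z` with arrow parts
`a - 1ₓ` and `b - 1_y`, the composite `b∘a` equals `1ₓ + (a - 1ₓ) + (b - 1_y)`. -/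
theorem linCat_comp_eq_add_arrowParts (k : Type*) [Field k] (V₀ V₁ : Type*)
    [AddCommGroup V₀] [Module k V₀] [AddCommGroup V₁] [Module k V₁]
    (L : LinCat k V₀ V₁) (a b : V₁) (h : L.s b = L.t a) :
    L.comp a b h = L.e (L.s a) + (a - L.e (L.s a)) + (b - L.e (L.s b)) := by
  have h1 : L.s (L.e (L.t a)) = L.t a := L.s_e _
  have h2 : L.s (b - L.e (L.t a)) = L.t (0 : V₁) := by
    simp [map_sub, h, h1]
  have h3 : L.s (L.e (L.t a) + (b - L.e (L.t a))) = L.t (a + 0) := by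
    simp [h, h1]
  have key : L.comp (a + 0) (L.e (L.t a) + (b - L.e (L.t a))) h3
      = L.comp a (L.e (L.t a)) h1 + L.comp 0 (b - L.e (L.t a)) h2 :=
    L.comp_add a (L.e (L.t a)) 0 (b - L.e (L.t a)) h1 h2 h3
  have e0 : L.comp 0 (b - L.e (L.t a)) h2 = b - L.e (L.t a) := by
    have hs : L.s (b - L.e (L.t a)) = 0 := by simp [map_sub, h, h1]
    have := L.id_comp (b - L.e (L.t a)) (by rw [hs]; simp)
    simp only [hs, map_zero] at this
    exact this
  have hab : a + 0 = a := by abel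
  have hb : L.e (L.t a) + (b - L.e (L.t a)) = b := by abel
  have : L.comp a b h = L.comp (a + 0) (L.e (L.t a) + (b - L.e (L.t a))) h3 := by
    congr 1 <;> simp
  rw [this, key, L.comp_id a h1, e0, h]
  abel
end

section
/- The normalized chain complex functor N and the functor Γ define an equivalence between the category of 2-vector spaces (linear categories with linear functors) and the category of 2-term cochain complexes concentrated in degrees −1 and 0 (with chain maps). Concretely, for any 2-vector space V there is a natural isomorphism V ≅ Γ(N(V)), and for any 2-term complex C a natural isomorphism N(Γ(C)) ≅ C. -/
/-- The functor `Γ` from 2-term cochain complexes (a linear map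
`d : C⁻¹ → C⁰`) to linear categories: objects `C⁰`, arrows `C⁰ ⊕ C⁻¹`,
`s(x,a) = x`, `t(x,a) = x + da`, `1ₓ = (x,0)`, `(y,b)∘(x,a) = (x, a+b)`. -/
def Gamma (k : Type*) [Field k] {C0 Cm1 : Type*}
    [AddCommGroup C0] [Module k C0] [AddCommGroup Cm1] [Module k Cm1]
    (d : Cm1 →ₗ[k] C0) : LinCat k C0 (C0 × Cm1) where
  s := LinearMap.fst k C0 Cm1
  t := LinearMap.fst k C0 Cm1 + d.comp (LinearMap.snd k C0 Cm1)
  e := LinearMap.inl k C0 Cm1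
  comp := fun a b _ => (a.1, a.2 + b.2)
  s_e := fun _ => rfl
  t_e := fun x => by simp
  s_comp := fun _ _ _ => rfl
  t_comp := fun a b h => by
    simpa [map_add, add_assoc] using congrArg (· + d b.2) h.symm
  comp_add := fun a b a' b' _ _ _ => by
    ext <;> simp <;> abel
  comp_smul := fun c a b _ _ => by ext <;> simp
  id_comp := fun a _ => by simp
  comp_id := fun a _ => by simp
  assoc := fun a b c _ _ _ _ => by ext <;> simp [add_assoc]

theorem LinCat.comp_congr {k : Type*} [Field k] {V₀ V₁ : Type*}
    [AddCommGroup V₀] [Module k V₀] [AddCommGroup V₁] [Module k V₁]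
    (L : LinCat k V₀ V₁) {a a' b b' : V₁} (ha : a = a') (hb : b = b')
    (h : L.s b = L.t a) (h' : L.s b' = L.t a') :
    L.comp a b h = L.comp a' b' h' := by subst ha; subst hb; rfl

theorem LinCat.comp_eq {k : Type*} [Field k] {V₀ V₁ : Type*}
    [AddCommGroup V₀] [Module k V₀] [AddCommGroup V₁] [Module k V₁]
    (L : LinCat k V₀ V₁) (a b : V₁) (h : L.s b = L.t a) :
    L.comp a b h = a + b - L.e (L.t a) := by
  have h₁ : L.s (L.e (L.t a)) = L.t a := L.s_e _
  have hz : L.s (b - L.e (L.t a)) = 0 := by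
    simp [map_sub, h, L.s_e]
  have h₂ : L.s (b - L.e (L.t a)) = L.t (0 : V₁) := by simp [hz]
  have h₃ : L.s (L.e (L.t a) + (b - L.e (L.t a))) = L.t (a + (0 : V₁)) := by
    simp [h]
  have key := L.comp_add a (L.e (L.t a)) 0 (b - L.e (L.t a)) h₁ h₂ h₃
  have hc1 : L.comp a (L.e (L.t a)) h₁ = a := L.comp_id a h₁
  have hc2 : L.comp 0 (b - L.e (L.t a)) h₂ = b - L.e (L.t a) := by
    have hid := L.id_comp (b - L.e (L.t a)) (by simp [hz, L.t_e])
    exact (L.comp_congr (by rw [hz, map_zero]) rfl h₂ _).trans hid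
  calc L.comp a b h = L.comp (a + 0) (L.e (L.t a) + (b - L.e (L.t a))) h₃ :=
        L.comp_congr (by abel) (by abel) _ _
    _ = a + (b - L.e (L.t a)) := by rw [key, hc1, hc2]
    _ = a + b - L.e (L.t a) := by abel

/-- **Dold–Kan for 2-vector spaces.**
The normalized complex `N(V) = (ker s →t→ V₀)` and the functor `Γ` give an
equivalence between linear categories and 2-term complexes: every linear
category `V` is isomorphic (compatibly with all structure) to `Γ(N(V))`, and
for every 2-term complex `C` the normalized complex of `Γ(C)` is isomorphic
to `C` compatibly with the differentials. -/
theorem gamma_normalization_equivalence (k : Type*) [Field k] :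
    (∀ (V₀ V₁ : Type) (_ : AddCommGroup V₀) (_ : Module k V₀)
        (_ : AddCommGroup V₁) (_ : Module k V₁) (L : LinCat k V₀ V₁),
      ∃ F : V₁ ≃ₗ[k] (V₀ × ↥(LinearMap.ker L.s)),
        (∀ a, (Gamma k ((L.t.comp (LinearMap.ker L.s).subtype)) ).s (F a) = L.s a) ∧
        (∀ a, (Gamma k ((L.t.comp (LinearMap.ker L.s).subtype)) ).t (F a) = L.t a) ∧
        (∀ x, F (L.e x) = (Gamma k ((L.t.comp (LinearMap.ker L.s).subtype))).e x) ∧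
        (∀ (a b : V₁) (h : L.s b = L.t a)
            (h' : (Gamma k ((L.t.comp (LinearMap.ker L.s).subtype))).s (F b)
                = (Gamma k ((L.t.comp (LinearMap.ker L.s).subtype))).t (F a)),
          F (L.comp a b h)
            = (Gamma k ((L.t.comp (LinearMap.ker L.s).subtype))).comp (F a) (F b) h'))
    ∧
    (∀ (C0 Cm1 : Type) (_ : AddCommGroup C0) (_ : Module k C0)
        (_ : AddCommGroup Cm1) (_ : Module k Cm1) (d : Cm1 →ₗ[k] C0),
      ∃ G : ↥(LinearMap.ker (Gamma k d).s) ≃ₗ[k] Cm1,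
        ∀ a : ↥(LinearMap.ker (Gamma k d).s), d (G a) = (Gamma k d).t a.val) := by
  constructor
  · intro V₀ V₁ _ _ _ _ L
    refine ⟨{
      toFun := fun a => (L.s a, ⟨a - L.e (L.s a), by simp [LinearMap.mem_ker, L.s_e]⟩)
      invFun := fun p => L.e p.1 + p.2.val
      map_add' := fun a b => by
        ext
        · simp
        · simp; abel
      map_smul' := fun c a => by
        ext
        · simp
        · simp [smul_sub]
      left_inv := fun a => by simp
      right_inv := fun p => by
        have hp : L.s p.2.val = 0 := p.2.prop
        ext
        · simp [hp, L.s_e]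
        · simp [hp, L.s_e] }, ?_, ?_, ?_, ?_⟩
    · intro a; rfl
    · intro a
      show L.s a + L.t (a - L.e (L.s a)) = L.t a
      simp [map_sub, L.t_e]
    · intro x
      show (L.s (L.e x), _) = ((x, 0) : V₀ × ↥(LinearMap.ker L.s))
      ext
      · simp [L.s_e]
      · simp [L.s_e]
    · intro a b h h'
      have hcomp := L.comp_eq a b h
      have hs : L.s (a + b - L.e (L.t a)) = L.s a := by
        simp [map_add, map_sub, L.s_e, h]
      ext
      · show L.s (L.comp a b h) = L.s a
        exact L.s_comp a b h
      · show L.comp a b h - L.e (L.s (L.comp a b h))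
            = (a - L.e (L.s a)) + (b - L.e (L.s b))
        rw [hcomp, hs, ← h]
        abel
  · intro C0 Cm1 _ _ _ _ d
    refine ⟨{
      toFun := fun a => a.val.2
      invFun := fun c => ⟨(0, c), by simp [LinearMap.mem_ker, Gamma]⟩
      map_add' := fun a b => rfl
      map_smul' := fun c a => rfl
      left_inv := fun a => by
        have ha : a.val.1 = 0 := a.prop
        ext
        · exact ha.symm
        · rfl
      right_inv := fun c => rfl }, ?_⟩
    intro a
    have ha : a.val.1 = 0 := a.prop
    show d a.val.2 = a.val.1 + d a.val.2
    rw [ha, zero_add]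
end

section
/- In a 2-term EL∞-algebra, the symmetry equations (⟨x,y,z⟩ + ⟨y,x,z⟩ = −[⟨x,y⟩,z] and ⟨x,y,z⟩ + ⟨x,z,y⟩ = [x,⟨y,z⟩] − ⟨[x,y],z⟩ − ⟨y,[x,z]⟩ and ⟨x,[y,z]⟩ = ⟨[y,z],x⟩) imply [⟨x,y⟩,z] = [⟨y,x⟩,z] and [x,⟨y,z⟩] = [x,⟨z,y⟩] for all x,y,z ∈ C^0. -/
/-- A 2-term `EL∞`-algebra: a 2-term cochain complex `d : C⁻¹ → C⁰` with a
chain-map bracket (components `b00`, `b0m`, `bm0`), an alternator `alt`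
(a chain homotopy `[·,·] + [·,·]∘σ ⇒ 0`) and a Jacobiator `jac` (a chain
homotopy witnessing the Leibniz/Jacobi identity), subject to the coherence
equations of Roytenberg's definition. -/
structure EL2 (k C0 Cm1 : Type*) [Field k]
    [AddCommGroup C0] [Module k C0] [AddCommGroup Cm1] [Module k Cm1] where
  d : Cm1 →ₗ[k] C0
  b00 : C0 →ₗ[k] C0 →ₗ[k] C0
  b0m : C0 →ₗ[k] Cm1 →ₗ[k] Cm1
  bm0 : Cm1 →ₗ[k] C0 →ₗ[k] Cm1
  chain1 : ∀ x b, d (b0m x b) = b00 x (d b)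
  chain2 : ∀ a y, d (bm0 a y) = b00 (d a) y
  chain3 : ∀ a b, b0m (d a) b = bm0 a (d b)
  alt : C0 →ₗ[k] C0 →ₗ[k] Cm1
  jac : C0 →ₗ[k] C0 →ₗ[k] C0 →ₗ[k] Cm1
  sym1 : ∀ x y, b00 x y + b00 y x = d (alt x y)
  sym2 : ∀ a y, bm0 a y + b0m y a = alt (d a) y
  sym3 : ∀ x b, b0m x b + bm0 b x = alt x (d b)
  leib1 : ∀ x y z,
    b00 x (b00 y z) - b00 (b00 x y) z - b00 y (b00 x z) = d (jac x y z)
  leib2 : ∀ a y z,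
    bm0 a (b00 y z) - bm0 (bm0 a y) z - b0m y (bm0 a z) = jac (d a) y z
  leib3 : ∀ x b z,
    b0m x (bm0 b z) - bm0 (b0m x b) z - bm0 b (b00 x z) = jac x (d b) z
  leib4 : ∀ x y c,
    b0m x (b0m y c) - b0m (b00 x y) c - b0m y (b0m x c) = jac x y (d c)
  coh1 : ∀ x y z w,
    b0m x (jac y z w) + jac x (b00 y z) w + jac x z (b00 y w)
      + bm0 (jac x y z) w + b0m z (jac x y w)
    = jac x y (b00 z w) + jac (b00 x y) z w + b0m y (jac x z w)
      + jac y (b00 x z) w + jac y z (b00 x w)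
  coh2 : ∀ x y z, jac x y z + jac y x z = -bm0 (alt x y) z
  coh3 : ∀ x y z,
    jac x y z + jac x z y = b0m x (alt y z) - alt (b00 x y) z - alt y (b00 x z)
  coh4 : ∀ x y z, alt x (b00 y z) = alt (b00 y z) x

/-- In a 2-term `EL∞`-algebra the symmetry equations
(coherences `⟨x,y,z⟩+⟨y,x,z⟩ = −[⟨x,y⟩,z]`,
`⟨x,y,z⟩+⟨x,z,y⟩ = [x,⟨y,z⟩]−⟨[x,y],z⟩−⟨y,[x,z]⟩` and
`⟨x,[y,z]⟩ = ⟨[y,z],x⟩`) imply `[⟨x,y⟩,z] = [⟨y,x⟩,z]` and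
`[x,⟨y,z⟩] = [x,⟨z,y⟩]`. -/
theorem el2_alt_symmetry_in_brackets (k C0 Cm1 : Type*) [Field k]
    [AddCommGroup C0] [Module k C0] [AddCommGroup Cm1] [Module k Cm1]
    (E : EL2 k C0 Cm1) (x y z : C0) :
    E.bm0 (E.alt x y) z = E.bm0 (E.alt y x) z ∧
    E.b0m x (E.alt y z) = E.b0m x (E.alt z y) := by
  constructor
  · have h1 := E.coh2 x y z
    have h2 := E.coh2 y x z
    have : -E.bm0 (E.alt x y) z = -E.bm0 (E.alt y x) z := by
      rw [← h1, ← h2]; abel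
    exact neg_injective this
  · have h1 := E.coh3 x y z
    have h2 := E.coh3 x z y
    have e1 := E.coh4 z x y
    have e2 := E.coh4 y x z
    have k1 : E.b0m x (E.alt y z)
        = E.jac x y z + E.jac x z y + E.alt (E.b00 x y) z + E.alt y (E.b00 x z) := by
      rw [sub_sub, eq_sub_iff_add_eq] at h1
      rw [← h1]; abel
    have k2 : E.b0m x (E.alt z y)
        = E.jac x z y + E.jac x y z + E.alt (E.b00 x z) y + E.alt z (E.b00 x y) := by
      rw [sub_sub, eq_sub_iff_add_eq] at h2
      rw [← h2]; abel
    rw [k1, k2, ← e1, ← e2]; abel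
end

section
/- Let g be a Leibniz algebra, C^0 = g, C^{-1} = g^ann with d the inclusion. Then setting ⟨x,y⟩ = [x,y] + [y,x] defines an alternator making this data a hemistrict Lie 2-algebra (2-term EL∞-algebra with ⟨·,·,·⟩ = 0): i.e. the equations [x,y]+[y,x] = d⟨x,y⟩, [a,y]+[y,a] = ⟨da,y⟩, [x,b]+[b,x] = ⟨x,db⟩, [⟨x,y⟩,z] = 0, [x,⟨y,z⟩] = ⟨[x,y],z⟩ + ⟨y,[x,z]⟩, and ⟨x,[y,z]⟩ = ⟨[y,z],x⟩ all hold. -/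
/-!
In a left Leibniz algebra the Leibniz identity with `x = y` gives `[[x,x],z] = 0`, so every
element of `g^ann = span {[x,x]}` is central from the left. Polarising `[x+y,x+y]` puts every
`⟨x,y⟩ = [x,y] + [y,x]` into `g^ann`, and `[y,[x,x]] = ⟨[y,x],x⟩` shows that `g^ann` is also
stable under left brackets. The alternator equations then follow from the Leibniz identity
and `[⟨x,y⟩,z] = 0`.
-/

namespace LeibnizBracket

variable {R M : Type*} [CommRing R] [AddCommGroup M] [Module R M] (br : M →ₗ[R] M →ₗ[R] M)

/-- The ideal `g^ann` of a Leibniz algebra. -/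
def squareSpan : Submodule R M :=
  Submodule.span R {z : M | ∃ x : M, z = br x x}

theorem square_mem_squareSpan (x : M) : br x x ∈ squareSpan br :=
  Submodule.subset_span ⟨x, rfl⟩

theorem add_swap_mem_squareSpan (x y : M) : br x y + br y x ∈ squareSpan br := by
  have polarise : br x y + br y x = br (x + y) (x + y) - br x x - br y y := by
    simp only [map_add, LinearMap.add_apply]
    abel
  rw [polarise]
  exact sub_mem (sub_mem (square_mem_squareSpan br _) (square_mem_squareSpan br _))
    (square_mem_squareSpan br _)

variable {br} (leib : ∀ x y z : M, br x (br y z) = br (br x y) z + br y (br x z))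
include leib

theorem apply_square_eq_zero (x : M) : br (br x x) = 0 :=
  LinearMap.ext fun z => by simpa using leib x x z

theorem squareSpan_le_ker : squareSpan br ≤ LinearMap.ker br :=
  Submodule.span_le.mpr fun _ ⟨x, hz⟩ => hz ▸ apply_square_eq_zero leib x

theorem apply_eq_zero_of_mem_squareSpan {a : M} (ha : a ∈ squareSpan br) (y : M) :
    br a y = 0 := by
  rw [LinearMap.mem_ker.mp (squareSpan_le_ker leib ha), LinearMap.zero_apply]

theorem squareSpan_le_comap_apply (y : M) :
    squareSpan br ≤ (squareSpan br).comap (br y) :=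
  Submodule.span_le.mpr fun _ ⟨x, hz⟩ => by
    rw [hz, SetLike.mem_coe, Submodule.mem_comap, leib]
    exact add_swap_mem_squareSpan br (br y x) x

theorem apply_add_swap (x y z : M) :
    br x (br y z + br z y) = (br (br x y) z + br z (br x y)) + (br y (br x z) + br (br x z) y) := by
  rw [map_add, leib x y z, leib x z y]
  abel

end LeibnizBracket

/-- For a left Leibniz algebra `g`, taking `C⁰ = g`,
`C⁻¹ = g^ann` (the ideal spanned by squares) with `d` the inclusion and
alternator `⟨x,y⟩ = [x,y] + [y,x]`, yields a hemistrict Lie 2-algebra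
(a 2-term `EL∞`-algebra with trivial Jacobiator).  Concretely: `g^ann` is
closed under left and right brackets and contains all `[x,y]+[y,x]`, and the
equations `[x,y]+[y,x] = d⟨x,y⟩`, `[a,y]+[y,a] = ⟨da,y⟩`, `[x,b]+[b,x] = ⟨x,db⟩`
(trivial since `d` is the inclusion), `[⟨x,y⟩,z] = 0`,
`[x,⟨y,z⟩] = ⟨[x,y],z⟩ + ⟨y,[x,z]⟩` and `⟨x,[y,z]⟩ = ⟨[y,z],x⟩` all hold. -/
theorem leibniz_hemistrict_lie2 (k : Type*) [Field k]
    (g : Type*) [AddCommGroup g] [Module k g]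
    (br : g →ₗ[k] g →ₗ[k] g)
    (leib : ∀ x y z : g, br x (br y z) = br (br x y) z + br y (br x z)) :
    -- the span of squares is a two-sided ideal containing all ⟨x,y⟩
    (∀ x y : g, br x y + br y x ∈ Submodule.span k {z : g | ∃ x : g, z = br x x}) ∧
    (∀ a ∈ Submodule.span k {z : g | ∃ x : g, z = br x x}, ∀ y : g,
      br a y ∈ Submodule.span k {z : g | ∃ x : g, z = br x x} ∧
      br y a ∈ Submodule.span k {z : g | ∃ x : g, z = br x x}) ∧
    -- alternator equations (with d the inclusion, stated in g)
    (∀ x y : g, br x y + br y x = br x y + br y x) ∧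
    -- [⟨x,y⟩,z] = 0
    (∀ x y z : g, br (br x y + br y x) z = 0) ∧
    -- [x,⟨y,z⟩] = ⟨[x,y],z⟩ + ⟨y,[x,z]⟩
    (∀ x y z : g, br x (br y z + br z y)
      = (br (br x y) z + br z (br x y)) + (br y (br x z) + br (br x z) y)) ∧
    -- ⟨x,[y,z]⟩ = ⟨[y,z],x⟩
    (∀ x y z : g, br x (br y z) + br (br y z) x = br (br y z) x + br x (br y z)) := by
  open LeibnizBracket in
  exact ⟨add_swap_mem_squareSpan br,
    fun a ha y => ⟨apply_eq_zero_of_mem_squareSpan leib ha y ▸ zero_mem _,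
      squareSpan_le_comap_apply leib y ha⟩,
    fun _ _ => rfl,
    fun x y => apply_eq_zero_of_mem_squareSpan leib (add_swap_mem_squareSpan br x y),
    apply_add_swap leib,
    fun _ _ _ => add_comm _ _⟩
end

section
/- Let g be a Lie algebra with an ad-invariant symmetric bilinear form ⟨·,·⟩ with values in k. Then C^0 = g, C^{-1} = k, d = 0, with actions [x,a] = [a,x] = 0 for a ∈ k, bracket of g on C^0, and alternator ⟨·,·⟩, form a hemistrict Lie 2-algebra: all the 2-term EL∞ equations with trivial Jacobiator hold. -/
/-- A Lie algebra `g` with an ad-invariant symmetric bilinear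
form `B : g × g → k` gives a hemistrict Lie 2-algebra: `C⁰ = g`, `C⁻¹ = k`,
`d = 0`, trivial actions `[x,a] = [a,x] = 0`, bracket of `g`, alternator `B`,
and trivial Jacobiator, satisfy all the 2-term `EL∞`-equations. -/
theorem quadratic_lie_hemistrict (k : Type*) [Field k]
    (g : Type*) [LieRing g] [LieAlgebra k g]
    (B : g →ₗ[k] g →ₗ[k] k)
    (hsymm : ∀ x y : g, B x y = B y x)
    (hinv : ∀ x y z : g, B ⁅x, y⁆ z + B y ⁅x, z⁆ = 0) :
    ∃ E : EL2 k g k,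
      E.d = 0 ∧
      (∀ x y : g, E.b00 x y = ⁅x, y⁆) ∧
      E.b0m = 0 ∧ E.bm0 = 0 ∧
      (∀ x y : g, E.alt x y = B x y) ∧
      E.jac = 0 := by
  refine ⟨{
    d := 0
    b00 := LinearMap.mk₂ k (fun x y => ⁅x, y⁆)
      (fun x y z => add_lie x y z) (fun c x y => smul_lie c x y)
      (fun x y z => lie_add x y z) (fun c x y => lie_smul c x y)
    b0m := 0
    bm0 := 0
    alt := B
    jac := 0
    chain1 := by intros; simp
    chain2 := by intros; simp
    chain3 := by intros; simp
    sym1 := by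
      intros x y
      simp only [LinearMap.mk₂_apply, LinearMap.zero_apply, LinearMap.map_zero]
      rw [← lie_skew y x]
      abel
    sym2 := by intros; simp
    sym3 := by intros; simp
    leib1 := by
      intros x y z
      simp only [LinearMap.mk₂_apply, LinearMap.zero_apply]
      rw [leibniz_lie]
      abel
    leib2 := by intros; simp
    leib3 := by intros; simp
    leib4 := by intros; simp
    coh1 := by intros; simp
    coh2 := by intros; simp
    coh3 := by
      intros x y z
      have := hinv x y z
      simp only [LinearMap.mk₂_apply, LinearMap.zero_apply, LinearMap.map_zero]
      linear_combination hinv x y z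
    coh4 := by intros x y z; simp [hsymm] }, rfl, fun x y => rfl, rfl, rfl,
      fun x y => rfl, rfl⟩
end

section
/- Let C be a 2-term EL∞-algebra over a field of characteristic ≠ 2, 3. Define {x,y} = ½([x,y] − [y,x]), {x,a} = ½([x,a] − [a,x]) = −{a,x}, and {x,y,z} = (1/6)Σ_{σ∈S_3} (−1)^σ ⟨x_{σ(1)},x_{σ(2)},x_{σ(3)}⟩ − (1/12)Σ_{σ∈S_3} (−1)^σ ⟨[x_{σ(1)},x_{σ(2)}],x_{σ(3)}⟩. Then (C, d, {·,·}, {·,·,·}) is a 2-term L∞-algebra: {·,·} is a skew-symmetric chain map, {·,·,·} is totally skew-symmetric, d{x,y,z} = {x,{y,z}} − {{x,y},z} − {y,{x,z}}, {da,y,z} measures the Jacobi defect on arrows, and the L∞ coherence Σ(±){x,{y,z,w}}-type identity in four object variables holds. -/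
/-- A 2-term `L∞`-algebra: a 2-term complex `d : C⁻¹ → C⁰` with a
skew-symmetric chain-map bracket (components `b00`, `b0m`, `bm0`) and a
totally skew-symmetric Jacobiator `jac` measuring the Jacobi defect, subject
to the `L∞` coherence law in four variables. -/
structure L2Linf (k C0 Cm1 : Type*) [Field k]
    [AddCommGroup C0] [Module k C0] [AddCommGroup Cm1] [Module k Cm1] where
  d : Cm1 →ₗ[k] C0
  b00 : C0 →ₗ[k] C0 →ₗ[k] C0
  b0m : C0 →ₗ[k] Cm1 →ₗ[k] Cm1
  bm0 : Cm1 →ₗ[k] C0 →ₗ[k] Cm1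
  chain1 : ∀ x b, d (b0m x b) = b00 x (d b)
  chain2 : ∀ a y, d (bm0 a y) = b00 (d a) y
  chain3 : ∀ a b, b0m (d a) b = bm0 a (d b)
  skew : ∀ x y, b00 x y = -b00 y x
  skewm : ∀ x a, b0m x a = -bm0 a x
  jac : C0 →ₗ[k] C0 →ₗ[k] C0 →ₗ[k] Cm1
  jac_skew12 : ∀ x y z, jac x y z = -jac y x z
  jac_skew23 : ∀ x y z, jac x y z = -jac x z y
  leib1 : ∀ x y z,
    b00 x (b00 y z) - b00 (b00 x y) z - b00 y (b00 x z) = d (jac x y z)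
  leib2 : ∀ a y z,
    bm0 a (b00 y z) - bm0 (bm0 a y) z - b0m y (bm0 a z) = jac (d a) y z
  leib3 : ∀ x b z,
    b0m x (bm0 b z) - bm0 (b0m x b) z - bm0 b (b00 x z) = jac x (d b) z
  leib4 : ∀ x y c,
    b0m x (b0m y c) - b0m (b00 x y) c - b0m y (b0m x c) = jac x y (d c)
  coh1 : ∀ x y z w,
    b0m x (jac y z w) + jac x (b00 y z) w + jac x z (b00 y w)
      + bm0 (jac x y z) w + b0m z (jac x y w)
    = jac x y (b00 z w) + jac (b00 x y) z w + b0m y (jac x z w)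
      + jac y (b00 x z) w + jac y z (b00 x w)

/-!
Clear denominators: put `c(u,v) = [u,v] - [v,u]` for all kinds of arguments and
`J = 2 Σ_σ (-1)^σ ⟨x_σ1,x_σ2,x_σ3⟩ - Σ_σ (-1)^σ ⟨[x_σ1,x_σ2],x_σ3⟩`, so that `{·,·} = c/2` and
`{·,·,·} = J/12`. The `L∞` laws for `(c, J)` hold with integer coefficients, each being an
alternating sum of instances of the `EL∞` laws: `3 (c(x,c(y,z)) - c(c(x,y),z) - c(y,c(x,z))) = dJ`
is the alternation over `S₃` of `2 leib1(x,y,z) - sym1([x,y],z)`; the three versions with an arrow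
argument agree up to skew-symmetry, and one of them is the antisymmetrization in its two objects
of a similar combination; the coherence law is the alternation over `S₄` of a sum of four `EL∞` laws.
Dividing by `2` and `12` then uses `1/4 = 3/12`.
-/

namespace LinearMap

variable {R M N : Type*} [CommRing R] [AddCommGroup M] [Module R M] [AddCommGroup N] [Module R N]

def alternatization₃ (J : M →ₗ[R] M →ₗ[R] M →ₗ[R] N) : M →ₗ[R] M →ₗ[R] M →ₗ[R] N :=
  J - J.flip - lflip.toLinearMap ∘ₗ J - (lflip.toLinearMap ∘ₗ J.flip).flip
    + (lflip.toLinearMap ∘ₗ J).flip + lflip.toLinearMap ∘ₗ J.flip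

@[simp]
theorem alternatization₃_apply (J : M →ₗ[R] M →ₗ[R] M →ₗ[R] N) (x y z : M) :
    alternatization₃ J x y z = J x y z - J y x z - J x z y - J z y x + J y z x + J z x y := by
  simp [alternatization₃]

end LinearMap

namespace EL2

variable {k C0 Cm1 : Type*} [Field k]
    [AddCommGroup C0] [Module k C0] [AddCommGroup Cm1] [Module k Cm1] (E : EL2 k C0 Cm1)

def commB00 : C0 →ₗ[k] C0 →ₗ[k] C0 := E.b00 - E.b00.flip

def commB0m : C0 →ₗ[k] Cm1 →ₗ[k] Cm1 := E.b0m - E.bm0.flip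

def commBm0 : Cm1 →ₗ[k] C0 →ₗ[k] Cm1 := E.bm0 - E.b0m.flip

def altJac : C0 →ₗ[k] C0 →ₗ[k] C0 →ₗ[k] Cm1 :=
  2 • E.jac.alternatization₃ - (E.b00.compr₂ E.alt).alternatization₃

@[simp]
theorem commB00_apply (x y : C0) : E.commB00 x y = E.b00 x y - E.b00 y x := rfl

@[simp]
theorem commB0m_apply (x : C0) (a : Cm1) : E.commB0m x a = E.b0m x a - E.bm0 a x := rfl

@[simp]
theorem commBm0_apply (a : Cm1) (x : C0) : E.commBm0 a x = E.bm0 a x - E.b0m x a := rfl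

@[simp]
theorem altJac_apply (x y z : C0) :
    E.altJac x y z
      = 2 • (E.jac x y z - E.jac y x z - E.jac x z y - E.jac z y x + E.jac y z x + E.jac z x y)
        - (E.alt (E.b00 x y) z - E.alt (E.b00 y x) z - E.alt (E.b00 x z) y
          - E.alt (E.b00 z y) x + E.alt (E.b00 y z) x + E.alt (E.b00 z x) y) := by
  simp [altJac]

theorem commB00_skew (x y : C0) : E.commB00 x y = -E.commB00 y x := by simp

theorem commB0m_eq_neg_commBm0 (x : C0) (a : Cm1) : E.commB0m x a = -E.commBm0 a x := by simp

theorem altJac_swap₁₂ (x y z : C0) : E.altJac x y z = -E.altJac y x z := by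
  simp only [altJac_apply]; abel

theorem altJac_swap₂₃ (x y z : C0) : E.altJac x y z = -E.altJac x z y := by
  simp only [altJac_apply]; abel

theorem d_commB0m (x : C0) (b : Cm1) : E.d (E.commB0m x b) = E.commB00 x (E.d b) := by
  simp [E.chain1, E.chain2]

theorem d_commBm0 (a : Cm1) (y : C0) : E.d (E.commBm0 a y) = E.commB00 (E.d a) y := by
  simp [E.chain1, E.chain2]

theorem commB0m_d (a b : Cm1) : E.commB0m (E.d a) b = E.commBm0 a (E.d b) := by
  simp [E.chain3]

theorem bm0_add_b0m_of_d_eq {a : Cm1} {u : C0} (h : E.d a = u) (z : C0) :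
    E.bm0 a z + E.b0m z a = E.alt u z :=
  h ▸ E.sym2 a z

theorem comm_leib1 (x y z : C0) :
    3 • (E.commB00 x (E.commB00 y z) - E.commB00 (E.commB00 x y) z
      - E.commB00 y (E.commB00 x z)) = E.d (E.altJac x y z) := by
  simp only [commB00_apply, altJac_apply, map_add, map_sub, map_nsmul, LinearMap.sub_apply]
  linear_combination (norm := abel)
    2 • (E.leib1 x y z - E.leib1 x z y - E.leib1 y x z + E.leib1 y z x + E.leib1 z x y
      - E.leib1 z y x)
    - (E.sym1 (E.b00 x y) z - E.sym1 (E.b00 x z) y - E.sym1 (E.b00 y x) z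
      + E.sym1 (E.b00 y z) x + E.sym1 (E.b00 z x) y - E.sym1 (E.b00 z y) x)

theorem comm_leib2 (a : Cm1) (y z : C0) :
    3 • (E.commBm0 a (E.commB00 y z) - E.commBm0 (E.commBm0 a y) z
      - E.commB0m y (E.commBm0 a z)) = E.altJac (E.d a) y z := by
  simp only [commB00_apply, commB0m_apply, commBm0_apply, altJac_apply, map_sub,
    LinearMap.sub_apply]
  linear_combination (norm := abel)
    2 • (E.leib2 a y z - E.leib3 y a z + E.leib4 y z a - E.leib2 a z y + E.leib3 z a y
      - E.leib4 z y a)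
    - (E.bm0_add_b0m_of_d_eq (E.chain2 a y) z - E.bm0_add_b0m_of_d_eq (E.chain1 y a) z
      + E.sym3 (E.b00 y z) a - E.bm0_add_b0m_of_d_eq (E.chain2 a z) y
      + E.bm0_add_b0m_of_d_eq (E.chain1 z a) y - E.sym3 (E.b00 z y) a)

theorem comm_leib3 (x : C0) (b : Cm1) (z : C0) :
    3 • (E.commB0m x (E.commBm0 b z) - E.commBm0 (E.commB0m x b) z
      - E.commBm0 b (E.commB00 x z)) = E.altJac x (E.d b) z := by
  have h := E.comm_leib2 b z x
  simp only [commB00_apply, commB0m_apply, commBm0_apply, altJac_apply, map_sub,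
    LinearMap.sub_apply] at h ⊢
  linear_combination (norm := abel) h

theorem comm_leib4 (x y : C0) (c : Cm1) :
    3 • (E.commB0m x (E.commB0m y c) - E.commB0m (E.commB00 x y) c
      - E.commB0m y (E.commB0m x c)) = E.altJac x y (E.d c) := by
  have h := E.comm_leib2 c x y
  simp only [commB00_apply, commB0m_apply, commBm0_apply, altJac_apply, map_sub,
    LinearMap.sub_apply] at h ⊢
  linear_combination (norm := abel) h

-- Its alternation over `S₄` is `comm_coh1`.
theorem coh1_seed (x y z w : C0) :
    E.b0m x (E.jac y z w) + E.jac x (E.b00 y z) w + E.jac x z (E.b00 y w)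
      + 2 • E.bm0 (E.jac x y z) w + E.b0m z (E.jac x y w) + E.b0m w (E.jac x y z)
      + E.jac z w (E.b00 x y) + E.alt (E.b00 x y) (E.b00 z w) + E.alt (E.b00 y (E.b00 x z)) w
      + E.alt (E.b00 z (E.b00 x y)) w + E.alt (E.b00 (E.b00 x y) z) w
    = E.jac x y (E.b00 z w) + 2 • E.jac (E.b00 x y) z w + E.b0m y (E.jac x z w)
      + E.jac y (E.b00 x z) w + E.jac y z (E.b00 x w) + E.b0m z (E.alt (E.b00 x y) w)
      + E.bm0 (E.alt (E.b00 x y) z) w + E.alt (E.b00 x (E.b00 y z)) w := by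
  have bracket_jac := E.bm0_add_b0m_of_d_eq (E.leib1 x y z).symm w
  simp only [map_sub, LinearMap.sub_apply] at bracket_jac
  linear_combination (norm := abel) E.coh1 x y z w + bracket_jac - E.coh2 (E.b00 x y) z w
    + E.coh3 z (E.b00 x y) w

theorem comm_coh1 (x y z w : C0) :
    E.commB0m x (E.altJac y z w) + E.altJac x (E.commB00 y z) w
      + E.altJac x z (E.commB00 y w) + E.commBm0 (E.altJac x y z) w
      + E.commB0m z (E.altJac x y w)
    = E.altJac x y (E.commB00 z w) + E.altJac (E.commB00 x y) z w
      + E.commB0m y (E.altJac x z w) + E.altJac y (E.commB00 x z) w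
      + E.altJac y z (E.commB00 x w) := by
  simp only [commB00_apply, commB0m_apply, commBm0_apply, altJac_apply, map_add, map_sub,
    map_nsmul, LinearMap.add_apply, LinearMap.sub_apply, LinearMap.smul_apply]
  linear_combination (norm := abel)
    E.coh1_seed x y z w - E.coh1_seed x y w z - E.coh1_seed x z y w
    + E.coh1_seed x z w y + E.coh1_seed x w y z - E.coh1_seed x w z y
    - E.coh1_seed y x z w + E.coh1_seed y x w z + E.coh1_seed y z x w
    - E.coh1_seed y z w x - E.coh1_seed y w x z + E.coh1_seed y w z x
    + E.coh1_seed z x y w - E.coh1_seed z x w y - E.coh1_seed z y x w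
    + E.coh1_seed z y w x + E.coh1_seed z w x y - E.coh1_seed z w y x
    - E.coh1_seed w x y z + E.coh1_seed w x z y + E.coh1_seed w y x z
    - E.coh1_seed w y z x - E.coh1_seed w z x y + E.coh1_seed w z y x

def skewB00 : C0 →ₗ[k] C0 →ₗ[k] C0 := (1/2 : k) • E.commB00

def skewB0m : C0 →ₗ[k] Cm1 →ₗ[k] Cm1 := (1/2 : k) • E.commB0m

def skewBm0 : Cm1 →ₗ[k] C0 →ₗ[k] Cm1 := (1/2 : k) • E.commBm0

def skewJac : C0 →ₗ[k] C0 →ₗ[k] C0 →ₗ[k] Cm1 := (1/12 : k) • E.altJac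

def skewSymmetrization (h2 : (2 : k) ≠ 0) (h3 : (3 : k) ≠ 0) : L2Linf k C0 Cm1 :=
  have quarter : (1/2 : k) * (1/2) = 1/12 * 3 := by
    rw [show (12 : k) = 2 * 2 * 3 by norm_num]; field_simp
  { d := E.d
    b00 := E.skewB00
    b0m := E.skewB0m
    bm0 := E.skewBm0
    chain1 := fun x b => by simp only [skewB00, skewB0m, LinearMap.smul_apply, map_smul, d_commB0m]
    chain2 := fun a y => by simp only [skewB00, skewBm0, LinearMap.smul_apply, map_smul, d_commBm0]
    chain3 := fun a b => by simp only [skewB0m, skewBm0, LinearMap.smul_apply, commB0m_d]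
    skew := fun x y => by simp only [skewB00, LinearMap.smul_apply, E.commB00_skew x y, smul_neg]
    skewm := fun x a => by
      simp only [skewB0m, skewBm0, LinearMap.smul_apply, E.commB0m_eq_neg_commBm0 x a, smul_neg]
    jac := E.skewJac
    jac_skew12 := fun x y z => by
      simp only [skewJac, LinearMap.smul_apply, E.altJac_swap₁₂ x y z, smul_neg]
    jac_skew23 := fun x y z => by
      simp only [skewJac, LinearMap.smul_apply, E.altJac_swap₂₃ x y z, smul_neg]
    leib1 := fun x y z => by
      simp only [skewB00, skewJac, LinearMap.smul_apply, map_smul, smul_smul, quarter]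
      linear_combination (norm := module) (1/12 : k) • E.comm_leib1 x y z
    leib2 := fun a y z => by
      simp only [skewB00, skewB0m, skewBm0, skewJac, LinearMap.smul_apply, map_smul, smul_smul,
        quarter]
      linear_combination (norm := module) (1/12 : k) • E.comm_leib2 a y z
    leib3 := fun x b z => by
      simp only [skewB00, skewB0m, skewBm0, skewJac, LinearMap.smul_apply, map_smul, smul_smul,
        quarter]
      linear_combination (norm := module) (1/12 : k) • E.comm_leib3 x b z
    leib4 := fun x y c => by
      simp only [skewB00, skewB0m, skewJac, LinearMap.smul_apply, map_smul, smul_smul,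
        quarter]
      linear_combination (norm := module) (1/12 : k) • E.comm_leib4 x y c
    coh1 := fun x y z w => by
      simp only [skewB00, skewB0m, skewBm0, skewJac, LinearMap.smul_apply, map_smul, smul_smul]
      linear_combination (norm := module) (1/12 * (1/2) : k) • E.comm_coh1 x y z w }

theorem skewJac_apply (h2 : (2 : k) ≠ 0) (h3 : (3 : k) ≠ 0) (x y z : C0) :
    E.skewJac x y z
      = (1/6 : k) • (E.jac x y z - E.jac y x z - E.jac x z y - E.jac z y x
          + E.jac y z x + E.jac z x y)
        - (1/12 : k) • (E.alt (E.b00 x y) z - E.alt (E.b00 y x) z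
          - E.alt (E.b00 x z) y - E.alt (E.b00 z y) x
          + E.alt (E.b00 y z) x + E.alt (E.b00 z x) y) := by
  simp only [skewJac, LinearMap.smul_apply, altJac_apply]
  match_scalars <;> field_simp [show (6 : k) = 2 * 3 by norm_num,
    show (12 : k) = 2 * 2 * 3 by norm_num] <;> ring

end EL2

/-- **skew-symmetrization.** Over a field of characteristic
≠ 2, 3, every 2-term `EL∞`-algebra yields a 2-term `L∞`-algebra on the same
complex, with bracket `{x,y} = ½([x,y] − [y,x])`, `{x,a} = ½([x,a] − [a,x])`
and Jacobiator
`{x,y,z} = (1/6)Σ_σ(−1)^σ⟨x_{σ1},x_{σ2},x_{σ3}⟩ −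
(1/12)Σ_σ(−1)^σ⟨[x_{σ1},x_{σ2}],x_{σ3}⟩`. -/
theorem el2_skew_symmetrization (k C0 Cm1 : Type*) [Field k]
    (h2 : (2 : k) ≠ 0) (h3 : (3 : k) ≠ 0)
    [AddCommGroup C0] [Module k C0] [AddCommGroup Cm1] [Module k Cm1]
    (E : EL2 k C0 Cm1) :
    ∃ L : L2Linf k C0 Cm1,
      L.d = E.d ∧
      (∀ x y : C0, L.b00 x y = (1/2 : k) • (E.b00 x y - E.b00 y x)) ∧
      (∀ (x : C0) (a : Cm1), L.b0m x a = (1/2 : k) • (E.b0m x a - E.bm0 a x)) ∧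
      (∀ (a : Cm1) (x : C0), L.bm0 a x = (1/2 : k) • (E.bm0 a x - E.b0m x a)) ∧
      (∀ x y z : C0, L.jac x y z
        = (1/6 : k) • (E.jac x y z - E.jac y x z - E.jac x z y - E.jac z y x
            + E.jac y z x + E.jac z x y)
          - (1/12 : k) • (E.alt (E.b00 x y) z - E.alt (E.b00 y x) z
            - E.alt (E.b00 x z) y - E.alt (E.b00 z y) x
            + E.alt (E.b00 y z) x + E.alt (E.b00 z x) y)) :=
  ⟨E.skewSymmetrization h2 h3, rfl, fun _ _ => rfl, fun _ _ => rfl, fun _ _ => rfl,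
    E.skewJac_apply h2 h3⟩
end

section
/- Let g be a Lie algebra with ad-invariant symmetric form k (e.g. the Killing form). Skew-symmetrization of the hemistrict Lie 2-algebra (C^0 = g, C^{-1} = ground field, d = 0, alternator k) yields the semistrict Lie 2-algebra with the same brackets and Jacobiator j(x,y,z) = −½ k([x,y],z); in particular −(1/12)Σ_{σ∈S_3}(−1)^σ k([x_{σ(1)},x_{σ(2)}],x_{σ(3)}) = −½ k([x,y],z). -/
/-! With `b0m = bm0 = 0` and `d = 0`, the axioms of `L2Linf` reduce to the Lie algebra axioms
for the bracket together with the statement that the Jacobiator is an alternating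
Chevalley–Eilenberg 3-cocycle with trivial coefficients. For an invariant symmetric form `B`,
`φ(x, y, z) = B([x, y], z)` is totally skew-symmetric, hence its skew-symmetrization is
`6 φ`, and it is a 3-cocycle by the Jacobi identity; so is every multiple of it, in particular
`-½ φ`. -/

section

variable {k g V : Type*} [Field k] [LieRing g] [LieAlgebra k g] [AddCommGroup V] [Module k V]

structure IsSkewCocycle (j : g →ₗ[k] g →ₗ[k] g →ₗ[k] V) : Prop where
  skew12 : ∀ x y z, j x y z = -j y x z
  skew23 : ∀ x y z, j x y z = -j x z y
  cocycle : ∀ x y z w, j x ⁅y, z⁆ w + j x z ⁅y, w⁆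
    = j x y ⁅z, w⁆ + j ⁅x, y⁆ z w + j y ⁅x, z⁆ w + j y z ⁅x, w⁆

theorem IsSkewCocycle.smul {j : g →ₗ[k] g →ₗ[k] g →ₗ[k] V} (hj : IsSkewCocycle j) (c : k) :
    IsSkewCocycle (c • j) where
  skew12 x y z := by simp only [LinearMap.smul_apply, hj.skew12 x y z, smul_neg]
  skew23 x y z := by simp only [LinearMap.smul_apply, hj.skew23 x y z, smul_neg]
  cocycle x y z w := by simp only [LinearMap.smul_apply, ← smul_add, hj.cocycle x y z w]

def L2Linf.ofSkewCocycle (j : g →ₗ[k] g →ₗ[k] g →ₗ[k] V) (hj : IsSkewCocycle j) :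
    L2Linf k g V where
  d := 0
  b00 := LieAlgebra.ad k g
  b0m := 0
  bm0 := 0
  chain1 _ _ := by simp
  chain2 _ _ := by simp
  chain3 _ _ := by simp
  skew x y := (lie_skew x y).symm
  skewm _ _ := by simp
  jac := j
  jac_skew12 := hj.skew12
  jac_skew23 := hj.skew23
  leib1 x y z := by
    simp only [LieHom.coe_toLinearMap, LieAlgebra.ad_apply, LinearMap.zero_apply, leibniz_lie x y z]
    abel
  leib2 _ _ _ := by simp
  leib3 _ _ _ := by simp
  leib4 _ _ _ := by simp
  coh1 x y z w := by simpa using hj.cocycle x y z w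

def bracketForm (B : g →ₗ[k] g →ₗ[k] k) : g →ₗ[k] g →ₗ[k] g →ₗ[k] k :=
  (LieAlgebra.ad k g : g →ₗ[k] Module.End k g).compr₂ B

@[simp]
theorem bracketForm_apply (B : g →ₗ[k] g →ₗ[k] k) (x y z : g) :
    bracketForm B x y z = B ⁅x, y⁆ z :=
  rfl

section InvariantForm

variable {B : g →ₗ[k] g →ₗ[k] k}

theorem lie_apply_eq_apply_lie (hinv : ∀ x y z : g, B ⁅x, y⁆ z + B y ⁅x, z⁆ = 0) (x y z : g) :
    B ⁅x, y⁆ z = B x ⁅y, z⁆ := by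
  have h := hinv y x z
  rw [← lie_skew y x, map_neg, LinearMap.neg_apply] at h
  linear_combination -h

theorem bracketForm_swap_left (x y z : g) : B ⁅y, x⁆ z = -B ⁅x, y⁆ z := by
  rw [← lie_skew y x, map_neg, LinearMap.neg_apply]

variable (hsymm : ∀ x y : g, B x y = B y x) (hinv : ∀ x y z : g, B ⁅x, y⁆ z + B y ⁅x, z⁆ = 0)
include hsymm hinv

theorem bracketForm_cyclic (x y z : g) : B ⁅x, y⁆ z = B ⁅y, z⁆ x := by
  rw [lie_apply_eq_apply_lie hinv, hsymm]

theorem bracketForm_swap_right (x y z : g) : B ⁅x, z⁆ y = -B ⁅x, y⁆ z := by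
  rw [bracketForm_cyclic hsymm hinv, bracketForm_swap_left, ← bracketForm_cyclic hsymm hinv]

theorem bracketForm_alternatingSum (x y z : g) :
    B ⁅x, y⁆ z - B ⁅y, x⁆ z - B ⁅x, z⁆ y - B ⁅z, y⁆ x + B ⁅y, z⁆ x + B ⁅z, x⁆ y
      = 6 * B ⁅x, y⁆ z := by
  have hcyc := bracketForm_cyclic hsymm hinv
  have hyzx : B ⁅y, z⁆ x = B ⁅x, y⁆ z := (hcyc x y z).symm
  have hzxy : B ⁅z, x⁆ y = B ⁅x, y⁆ z := (hcyc y z x).symm.trans hyzx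
  have hzyx : B ⁅z, y⁆ x = -B ⁅x, y⁆ z := by rw [bracketForm_swap_left, hyzx]
  rw [bracketForm_swap_left x y, bracketForm_swap_right hsymm hinv x y, hzyx, hyzx, hzxy]
  ring

theorem bracketForm_isSkewCocycle : IsSkewCocycle (bracketForm B) where
  skew12 x y z := bracketForm_swap_left y x z
  skew23 x y z := bracketForm_swap_right hsymm hinv x z y
  cocycle x y z w := by
    have hK := lie_apply_eq_apply_lie hinv
    simp only [bracketForm_apply, hK]
    have hx : B x ⁅⁅y, z⁆, w⁆ + B x ⁅z, ⁅y, w⁆⁆ = B x ⁅y, ⁅z, w⁆⁆ := by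
      rw [← map_add, ← leibniz_lie]
    have hy : B y ⁅⁅x, z⁆, w⁆ + B y ⁅z, ⁅x, w⁆⁆ = -B x ⁅y, ⁅z, w⁆⁆ := by
      rw [← map_add, ← leibniz_lie, ← hK y x, ← hK x y, bracketForm_swap_left]
    linear_combination hx - hy

end InvariantForm

theorem one_div_twelve_mul_six (h3 : (3 : k) ≠ 0) : (1 / 12 : k) * 6 = 1 / 2 := by
  by_cases h2 : (2 : k) = 0
  · -- both sides are `0⁻¹ = 0` up to a factor
    rw [show (12 : k) = 2 * 6 by norm_num, h2]
    simp
  · have h12 : (12 : k) ≠ 0 := by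
      rw [show (12 : k) = 2 * 2 * 3 by norm_num]
      exact mul_ne_zero (mul_ne_zero h2 h2) h3
    field_simp
    norm_num

end

theorem quadratic_skew_symmetrization_general (k : Type*) [Field k]
    (h3 : (3 : k) ≠ 0)
    (g : Type*) [LieRing g] [LieAlgebra k g]
    (B : g →ₗ[k] g →ₗ[k] k)
    (hsymm : ∀ x y : g, B x y = B y x)
    (hinv : ∀ x y z : g, B ⁅x, y⁆ z + B y ⁅x, z⁆ = 0) :
    (∀ x y z : g,
      -(1/12 : k) • (B ⁅x, y⁆ z - B ⁅y, x⁆ z - B ⁅x, z⁆ y - B ⁅z, y⁆ x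
          + B ⁅y, z⁆ x + B ⁅z, x⁆ y)
        = -(1/2 : k) • B ⁅x, y⁆ z) ∧
    ∃ L : L2Linf k g k,
      L.d = 0 ∧
      (∀ x y : g, L.b00 x y = ⁅x, y⁆) ∧
      L.b0m = 0 ∧ L.bm0 = 0 ∧
      (∀ x y z : g, L.jac x y z = -(1/2 : k) • B ⁅x, y⁆ z) := by
  refine ⟨fun x y z => ?_, L2Linf.ofSkewCocycle _
    ((bracketForm_isSkewCocycle hsymm hinv).smul (-(1 / 2 : k))),
    rfl, fun _ _ => rfl, rfl, rfl, fun _ _ _ => rfl⟩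
  rw [bracketForm_alternatingSum hsymm hinv, smul_eq_mul, smul_eq_mul, ← mul_assoc, neg_mul,
    one_div_twelve_mul_six h3, neg_mul]

/-- For a Lie algebra `g` with an ad-invariant symmetric
bilinear form `B` (e.g. the Killing form), skew-symmetrizing the associated
hemistrict Lie 2-algebra (`C⁰ = g`, `C⁻¹ = k`, `d = 0`, alternator `B`) gives
the semistrict Lie 2-algebra with the same brackets and Jacobiator
`j(x,y,z) = −½ B([x,y],z)`; in particular
`−(1/12)Σ_{σ∈S₃}(−1)^σ B([x_{σ1},x_{σ2}],x_{σ3}) = −½ B([x,y],z)`. -/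
theorem quadratic_skew_symmetrization (k : Type*) [Field k]
    (h2 : (2 : k) ≠ 0) (h3 : (3 : k) ≠ 0)
    (g : Type*) [LieRing g] [LieAlgebra k g]
    (B : g →ₗ[k] g →ₗ[k] k)
    (hsymm : ∀ x y : g, B x y = B y x)
    (hinv : ∀ x y z : g, B ⁅x, y⁆ z + B y ⁅x, z⁆ = 0) :
    (∀ x y z : g,
      -(1/12 : k) • (B ⁅x, y⁆ z - B ⁅y, x⁆ z - B ⁅x, z⁆ y - B ⁅z, y⁆ x
          + B ⁅y, z⁆ x + B ⁅z, x⁆ y)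
        = -(1/2 : k) • B ⁅x, y⁆ z) ∧
    ∃ L : L2Linf k g k,
      L.d = 0 ∧
      (∀ x y : g, L.b00 x y = ⁅x, y⁆) ∧
      L.b0m = 0 ∧ L.bm0 = 0 ∧
      (∀ x y z : g, L.jac x y z = -(1/2 : k) • B ⁅x, y⁆ z) :=
  quadratic_skew_symmetrization_general k h3 g B hsymm hinv
end

section
/- Let L be a dgla concentrated in degrees ≥ −2 and γ ∈ L^1 a Maurer–Cartan element. Then the degree-zero part L̄^0 = ker(δ_γ : L^0 → L^1) is a Lie subalgebra of L^0, it acts on C = (L^{-2} → L^{-1}) by chain maps that are derivations of the derived bracket and of the alternator, and the crossed-module identities hold: δ_γ{T, f} = {T, δ_γ f} for T ∈ L̄^0, f ∈ L^{-1}, and [δ_γ f, g] (the derived bracket) = {δ_γ f, g} for f,g ∈ L^{-1}, where {·,·} denotes the dgla bracket. -/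
/-- Transport along an equality of degrees. -/
def dcast (L : ℤ → Type*) {i j : ℤ} (h : i = j) (x : L i) : L j := h ▸ x

/-- A differential graded Lie algebra over `k`: graded pieces `L i`,
differential `δ` of degree `+1` squaring to zero, graded skew-symmetric
bracket satisfying the graded Jacobi identity, with `δ` a derivation. -/
structure DGLA (k : Type*) [Field k] (L : ℤ → Type*)
    [∀ i, AddCommGroup (L i)] [∀ i, Module k (L i)] where
  δ : ∀ i, L i →ₗ[k] L (i + 1)
  br : ∀ i j, L i →ₗ[k] L j →ₗ[k] L (i + j)
  δ_sq : ∀ (i) (x : L i), δ (i + 1) (δ i x) = 0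
  skew : ∀ (i j) (x : L i) (y : L j),
    br i j x y = -(((-1 : k) ^ (i * j)) • dcast L (by omega) (br j i y x))
  jacobi : ∀ (i j l) (x : L i) (y : L j) (z : L l),
    br i (j + l) x (br j l y z)
      = dcast L (by omega) (br (i + j) l (br i j x y) z)
        + ((-1 : k) ^ (i * j)) • dcast L (by omega) (br j (i + l) y (br i l x z))
  leibniz : ∀ (i j) (x : L i) (y : L j),
    δ (i + j) (br i j x y)
      = dcast L (by omega) (br (i + 1) j (δ i x) y)
        + ((-1 : k) ^ i) • dcast L (by omega) (br i (j + 1) x (δ j y))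

variable (k : Type*) [Field k] (L : ℤ → Type*)
  [∀ i, AddCommGroup (L i)] [∀ i, Module k (L i)]

/-- The twisted differential `δ_γ = δ + {γ,·}` from degree `-2` to `-1`. -/
def dGm2 (D : DGLA k L) (γ : L 1) (a : L (-2)) : L (-1) :=
  dcast L (by omega : (-2 : ℤ) + 1 = -1) (D.δ (-2) a)
    + dcast L (by omega : (1 : ℤ) + -2 = -1) (D.br 1 (-2) γ a)

/-- The twisted differential `δ_γ = δ + {γ,·}` from degree `-1` to `0`. -/
def dGm1 (D : DGLA k L) (γ : L 1) (x : L (-1)) : L 0 :=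
  dcast L (by omega : (-1 : ℤ) + 1 = 0) (D.δ (-1) x)
    + dcast L (by omega : (1 : ℤ) + -1 = 0) (D.br 1 (-1) γ x)

/-- The twisted differential `δ_γ = δ + {γ,·}` from degree `0` to `1`. -/
def dG0 (D : DGLA k L) (γ : L 1) (T : L 0) : L 1 :=
  dcast L (by omega : (0 : ℤ) + 1 = 1) (D.δ 0 T)
    + dcast L (by omega : (1 : ℤ) + 0 = 1) (D.br 1 0 γ T)

/-- The derived bracket `[x,y] = {δ_γ x, y}` on `L⁻¹`. -/
def brC (D : DGLA k L) (γ : L 1) (x y : L (-1)) : L (-1) :=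
  dcast L (by omega : (0 : ℤ) + -1 = -1) (D.br 0 (-1) (dGm1 k L D γ x) y)

/-- The alternator `⟨x,y⟩ = {x,y}`, the original dgla bracket on `L⁻¹`. -/
def altC (D : DGLA k L) (x y : L (-1)) : L (-2) :=
  dcast L (by omega : (-1 : ℤ) + -1 = -2) (D.br (-1) (-1) x y)

/-- The action `{T,·} : L⁻¹ → L⁻¹` of `T ∈ L⁰`. -/
def act1 (D : DGLA k L) (T : L 0) (x : L (-1)) : L (-1) :=
  dcast L (by omega : (0 : ℤ) + -1 = -1) (D.br 0 (-1) T x)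

/-- The action `{T,·} : L⁻² → L⁻²` of `T ∈ L⁰`. -/
def act2 (D : DGLA k L) (T : L 0) (a : L (-2)) : L (-2) :=
  dcast L (by omega : (0 : ℤ) + -2 = -2) (D.br 0 (-2) T a)

/-- The bracket `L⁰ × L⁰ → L⁰`. -/
def br00 (D : DGLA k L) (T U : L 0) : L 0 :=
  dcast L (by omega : (0 : ℤ) + 0 = 0) (D.br 0 0 T U)

/-- For a dgla `L` concentrated in degrees `≥ −2` with a
Maurer–Cartan element `γ ∈ L¹`: the kernel `L̄⁰ = ker(δ_γ : L⁰ → L¹)` is a Lie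
subalgebra; it acts on the complex `L⁻² → L⁻¹` by chain maps which are
derivations of the derived bracket and of the alternator; and the crossed
module identities `δ_γ{T,f} = {T, δ_γ f}` and `[δ_γ f, g] = {δ_γ f, g}`
hold. -/
theorem dgla_MC_crossed_module (D : DGLA k L) (γ : L 1)
    (hconc : ∀ i < (-2 : ℤ), ∀ x : L i, x = 0)
    (hMC : D.δ 1 γ + (1/2 : k) • D.br 1 1 γ γ = 0) :
    -- L̄⁰ is a Lie subalgebra of L⁰
    (∀ T U : L 0, dG0 k L D γ T = 0 → dG0 k L D γ U = 0 →
      dG0 k L D γ (br00 k L D T U) = 0) ∧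
    -- L̄⁰ acts by chain maps
    (∀ T : L 0, dG0 k L D γ T = 0 → ∀ a : L (-2),
      dGm2 k L D γ (act2 k L D T a) = act1 k L D T (dGm2 k L D γ a)) ∧
    -- ... which are derivations of the derived bracket
    (∀ T : L 0, dG0 k L D γ T = 0 → ∀ x y : L (-1),
      act1 k L D T (brC k L D γ x y)
        = brC k L D γ (act1 k L D T x) y + brC k L D γ x (act1 k L D T y)) ∧
    -- ... and derivations of the alternator
    (∀ T : L 0, dG0 k L D γ T = 0 → ∀ x y : L (-1),
      act2 k L D T (altC k L D x y)
        = altC k L D (act1 k L D T x) y + altC k L D x (act1 k L D T y)) ∧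
    -- crossed module identities
    (∀ T : L 0, dG0 k L D γ T = 0 → ∀ f : L (-1),
      dGm1 k L D γ (act1 k L D T f) = br00 k L D T (dGm1 k L D γ f)) ∧
    (∀ f g : L (-1),
      brC k L D γ f g
        = dcast L (by omega : (0 : ℤ) + -1 = -1)
            (D.br 0 (-1) (dGm1 k L D γ f) g)) := by
  -- crossed-module identity: δ_γ{T,f} = {T, δ_γ f}
  have cross : ∀ T : L 0, dG0 k L D γ T = 0 → ∀ f : L (-1),
      dGm1 k L D γ (act1 k L D T f) = br00 k L D T (dGm1 k L D γ f) := by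
    intro T hT f
    have hT' : (show L 1 from D.δ 0 T) + (show L 1 from D.br 1 0 γ T) = 0 := hT
    have lb : (show L 0 from D.δ (-1) (D.br 0 (-1) T f))
        = (show L 0 from D.br 1 (-1) (D.δ 0 T) f)
          + ((-1:k) ^ (0:ℤ)) • (show L 0 from D.br 0 0 T (D.δ (-1) f)) :=
      D.leibniz 0 (-1) T f
    have jb : (show L 0 from D.br 1 (-1) γ (D.br 0 (-1) T f))
        = (show L 0 from D.br 1 (-1) (D.br 1 0 γ T) f)
          + ((-1:k) ^ ((1:ℤ)*0)) •
              (show L 0 from D.br 0 0 T (D.br 1 (-1) γ f)) :=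
      D.jacobi 1 0 (-1) γ T f
    have e1 : D.br 1 (-1)
        ((show L 1 from D.δ 0 T) + (show L 1 from D.br 1 0 γ T)) f = 0 := by
      rw [hT']; simp
    simp only [map_add, LinearMap.add_apply] at e1
    show (show L 0 from D.δ (-1) (D.br 0 (-1) T f))
        + (show L 0 from D.br 1 (-1) γ (D.br 0 (-1) T f))
        = D.br 0 0 T ((show L 0 from D.δ (-1) f)
            + (show L 0 from D.br 1 (-1) γ f))
    rw [lb, jb, map_add]
    simp only [zpow_zero, mul_zero, one_smul]
    calc (show L 0 from D.br 1 (-1) (D.δ 0 T) f)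
          + (show L 0 from D.br 0 0 T (D.δ (-1) f))
          + ((show L 0 from D.br 1 (-1) (D.br 1 0 γ T) f)
            + (show L 0 from D.br 0 0 T (D.br 1 (-1) γ f)))
        = ((show L 0 from D.br 1 (-1) (D.δ 0 T) f)
            + (show L 0 from D.br 1 (-1) (D.br 1 0 γ T) f))
          + ((show L 0 from D.br 0 0 T (D.δ (-1) f))
            + (show L 0 from D.br 0 0 T (D.br 1 (-1) γ f))) := by abel
      _ = (show L 0 from D.br 0 0 T (D.δ (-1) f))
            + (show L 0 from D.br 0 0 T (D.br 1 (-1) γ f)) := by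
          rw [e1, zero_add]
  refine ⟨?_, ?_, ?_, ?_, cross, fun f g => rfl⟩
  · -- Lie subalgebra
    intro T U hT hU
    have hT' : (show L 1 from D.δ 0 T) + (show L 1 from D.br 1 0 γ T) = 0 := hT
    have hU' : (show L 1 from D.δ 0 U) + (show L 1 from D.br 1 0 γ U) = 0 := hU
    have lb : (show L 1 from D.δ 0 (D.br 0 0 T U))
        = (show L 1 from D.br 1 0 (D.δ 0 T) U)
          + ((-1:k) ^ (0:ℤ)) • (show L 1 from D.br 0 1 T (D.δ 0 U)) :=
      D.leibniz 0 0 T U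
    have jb : (show L 1 from D.br 1 0 γ (D.br 0 0 T U))
        = (show L 1 from D.br 1 0 (D.br 1 0 γ T) U)
          + ((-1:k) ^ ((1:ℤ)*0)) • (show L 1 from D.br 0 1 T (D.br 1 0 γ U)) :=
      D.jacobi 1 0 0 γ T U
    have e1 : D.br 1 0
        ((show L 1 from D.δ 0 T) + (show L 1 from D.br 1 0 γ T)) U = 0 := by
      rw [hT']; simp
    have e2 : D.br 0 1 T
        ((show L 1 from D.δ 0 U) + (show L 1 from D.br 1 0 γ U)) = 0 := by
      rw [hU']; simp
    simp only [map_add, LinearMap.add_apply] at e1 e2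
    show (show L 1 from D.δ 0 (D.br 0 0 T U))
        + (show L 1 from D.br 1 0 γ (D.br 0 0 T U)) = 0
    rw [lb, jb]
    simp only [zpow_zero, mul_zero, one_smul]
    calc (show L 1 from D.br 1 0 (D.δ 0 T) U)
          + (show L 1 from D.br 0 1 T (D.δ 0 U))
          + ((show L 1 from D.br 1 0 (D.br 1 0 γ T) U)
            + (show L 1 from D.br 0 1 T (D.br 1 0 γ U)))
        = ((show L 1 from D.br 1 0 (D.δ 0 T) U)
            + (show L 1 from D.br 1 0 (D.br 1 0 γ T) U))
          + ((show L 1 from D.br 0 1 T (D.δ 0 U))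
            + (show L 1 from D.br 0 1 T (D.br 1 0 γ U))) := by abel
      _ = 0 := by rw [e1, e2, add_zero]
  · -- chain maps
    intro T hT a
    have hT' : (show L 1 from D.δ 0 T) + (show L 1 from D.br 1 0 γ T) = 0 := hT
    have lb : (show L (-1) from D.δ (-2) (D.br 0 (-2) T a))
        = (show L (-1) from D.br 1 (-2) (D.δ 0 T) a)
          + ((-1:k) ^ (0:ℤ)) • (show L (-1) from D.br 0 (-1) T (D.δ (-2) a)) :=
      D.leibniz 0 (-2) T a
    have jb : (show L (-1) from D.br 1 (-2) γ (D.br 0 (-2) T a))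
        = (show L (-1) from D.br 1 (-2) (D.br 1 0 γ T) a)
          + ((-1:k) ^ ((1:ℤ)*0)) •
              (show L (-1) from D.br 0 (-1) T (D.br 1 (-2) γ a)) :=
      D.jacobi 1 0 (-2) γ T a
    have e1 : D.br 1 (-2)
        ((show L 1 from D.δ 0 T) + (show L 1 from D.br 1 0 γ T)) a = 0 := by
      rw [hT']; simp
    simp only [map_add, LinearMap.add_apply] at e1
    show (show L (-1) from D.δ (-2) (D.br 0 (-2) T a))
        + (show L (-1) from D.br 1 (-2) γ (D.br 0 (-2) T a))
        = D.br 0 (-1) T ((show L (-1) from D.δ (-2) a)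
            + (show L (-1) from D.br 1 (-2) γ a))
    rw [lb, jb, map_add]
    simp only [zpow_zero, mul_zero, one_smul]
    calc (show L (-1) from D.br 1 (-2) (D.δ 0 T) a)
          + (show L (-1) from D.br 0 (-1) T (D.δ (-2) a))
          + ((show L (-1) from D.br 1 (-2) (D.br 1 0 γ T) a)
            + (show L (-1) from D.br 0 (-1) T (D.br 1 (-2) γ a)))
        = ((show L (-1) from D.br 1 (-2) (D.δ 0 T) a)
            + (show L (-1) from D.br 1 (-2) (D.br 1 0 γ T) a))
          + ((show L (-1) from D.br 0 (-1) T (D.δ (-2) a))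
            + (show L (-1) from D.br 0 (-1) T (D.br 1 (-2) γ a))) := by abel
      _ = (show L (-1) from D.br 0 (-1) T (D.δ (-2) a))
            + (show L (-1) from D.br 0 (-1) T (D.br 1 (-2) γ a)) := by
          rw [e1, zero_add]
  · -- derivations of the derived bracket
    intro T hT x y
    have jb : (show L (-1) from D.br 0 (-1) T (D.br 0 (-1) (dGm1 k L D γ x) y))
        = (show L (-1) from D.br 0 (-1) (D.br 0 0 T (dGm1 k L D γ x)) y)
          + ((-1:k) ^ ((0:ℤ)*0)) •
              (show L (-1) from
                D.br 0 (-1) (dGm1 k L D γ x) (D.br 0 (-1) T y)) :=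
      D.jacobi 0 0 (-1) T (dGm1 k L D γ x) y
    have hc : D.br 0 0 T (dGm1 k L D γ x)
        = dGm1 k L D γ (act1 k L D T x) := (cross T hT x).symm
    show (show L (-1) from D.br 0 (-1) T (D.br 0 (-1) (dGm1 k L D γ x) y))
        = (show L (-1) from D.br 0 (-1) (dGm1 k L D γ (act1 k L D T x)) y)
          + (show L (-1) from
              D.br 0 (-1) (dGm1 k L D γ x) (D.br 0 (-1) T y))
    rw [jb, hc]
    simp only [zero_mul, mul_zero, zpow_zero, one_smul]
  · -- derivations of the alternator
    intro T _ x y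
    have jb : (show L (-2) from D.br 0 (-2) T (D.br (-1) (-1) x y))
        = (show L (-2) from D.br (-1) (-1) (D.br 0 (-1) T x) y)
          + ((-1:k) ^ ((0:ℤ)*(-1))) •
              (show L (-2) from D.br (-1) (-1) x (D.br 0 (-1) T y)) :=
      D.jacobi 0 (-1) (-1) T x y
    show (show L (-2) from D.br 0 (-2) T (D.br (-1) (-1) x y))
        = (show L (-2) from D.br (-1) (-1) (D.br 0 (-1) T x) y)
          + (show L (-2) from D.br (-1) (-1) x (D.br 0 (-1) T y))
    rw [jb]
    simp only [zero_mul, mul_zero, zpow_zero, one_smul]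
end
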